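/- arXiv:2506.14543 — 3 statements merged into one kernel-verified Lean document; each statement's English description precedes it below -/
import Mathlib

section
/- Let B ≥ 0 and let (a_j), (b_j), (c_j), (γ_j), (d_j) be nonnegative sequences such that for all n ≥ 0, a_n + Σ_{j=0}^n b_j ≤ γ_n a_n + Σ_{j=0}^{n-1} (γ_j + d_j) a_j + Σ_{j=0}^n c_j + B. Suppose γ_j < 1 for all j and set σ_j = (1 - γ_j)^{-1}. Then for every n ≥ 0, a_n + Σ_{j=0}^n b_j ≤ exp(σ_n γ_n + Σ_{j=0}^{n-1} (σ_j γ_j + d_j)) · (Σ_{j=0}^n c_j + B). -/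
/-!
Put `F n = ∑_{j<n} (γ_j + d_j) a_j + ∑_{j≤n} c_j + B`, so that the hypothesis reads
`a_n + ∑_{j≤n} b_j ≤ γ_n a_n + F n`. Absorbing `γ_n a_n` gives `a_n ≤ σ_n F n`, hence
`F (n+1) ≤ (1 + σ_n γ_n)(1 + d_n) F n + c_{n+1} ≤ exp (σ_n γ_n + d_n) F n + c_{n+1}`,
using `1 + σ_n γ_n = σ_n`. A Grönwall recursion with exponential factors bounds `F n`, and one
more absorption of `γ_n a_n` gives the claim.
-/

open Finset Real

namespace Paper

theorem le_exp_sum_mul_of_le_exp_mul_add {u b r : ℕ → ℝ} (hr : ∀ n, 0 ≤ r n)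
    (hb : ∀ n, 0 ≤ b n) (hu : ∀ n, u (n + 1) ≤ exp (r n) * u n + b n) (n : ℕ) :
    u n ≤ exp (∑ i ∈ range n, r i) * (u 0 + ∑ k ∈ range n, b k) := by
  induction n with
  | zero => simp
  | succ n ih =>
    have h_one_le : 1 ≤ exp (∑ i ∈ range (n + 1), r i) := one_le_exp (sum_nonneg fun i _ ↦ hr i)
    have h_exp : exp (r n) * exp (∑ i ∈ range n, r i) = exp (∑ i ∈ range (n + 1), r i) := by
      rw [← exp_add, sum_range_succ, add_comm]
    calc u (n + 1) ≤ exp (r n) * u n + b n := hu n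
      _ ≤ exp (r n) * (exp (∑ i ∈ range n, r i) * (u 0 + ∑ k ∈ range n, b k)) + b n := by gcongr
      _ ≤ exp (∑ i ∈ range (n + 1), r i) * (u 0 + ∑ k ∈ range n, b k)
            + exp (∑ i ∈ range (n + 1), r i) * b n := by
          rw [← mul_assoc, h_exp]
          gcongr
          exact le_mul_of_one_le_left (hb n) h_one_le
      _ = exp (∑ i ∈ range (n + 1), r i) * (u 0 + ∑ k ∈ range (n + 1), b k) := by
          rw [sum_range_succ b n]; ring

theorem add_mul_le_exp_mul {x y γ d : ℝ} (hγ0 : 0 ≤ γ) (hγ1 : γ < 1) (hd : 0 ≤ d) (hy : 0 ≤ y)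
    (hx : x ≤ (1 - γ)⁻¹ * y) : y + (γ + d) * x ≤ exp ((1 - γ)⁻¹ * γ + d) * y := by
  have hσ : 1 + (1 - γ)⁻¹ * γ = (1 - γ)⁻¹ := by
    field_simp [(sub_pos.2 hγ1).ne']
    ring
  calc y + (γ + d) * x ≤ y + (γ + d) * ((1 - γ)⁻¹ * y) := by gcongr
    _ = (1 + (1 - γ)⁻¹ * γ) * (1 + d) * y := by linear_combination (-(d * y)) * hσ
    _ ≤ exp ((1 - γ)⁻¹ * γ) * exp d * y := by
        gcongr <;> linarith [add_one_le_exp ((1 - γ)⁻¹ * γ), add_one_le_exp d]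
    _ = exp ((1 - γ)⁻¹ * γ + d) * y := by rw [exp_add]

theorem discrete_gronwall_general
    (B : ℝ)
    (a b c γ d σ : ℕ → ℝ)
    (ha : ∀ j, 0 ≤ a j) (hb : ∀ j, 0 ≤ b j) (hc : ∀ j, 0 ≤ c j)
    (hγ0 : ∀ j, 0 ≤ γ j) (hd : ∀ j, 0 ≤ d j)
    (hγ1 : ∀ j, γ j < 1)
    (hσ : ∀ j, σ j = (1 - γ j)⁻¹)
    (hyp : ∀ n, a n + ∑ j ∈ range (n + 1), b j
      ≤ γ n * a n + ∑ j ∈ range n, (γ j + d j) * a j + ∑ j ∈ range (n + 1), c j + B) :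
    ∀ n, a n + ∑ j ∈ range (n + 1), b j
      ≤ Real.exp (σ n * γ n + ∑ j ∈ range n, (σ j * γ j + d j))
        * (∑ j ∈ range (n + 1), c j + B) := by
  simp only [hσ]
  set F : ℕ → ℝ := fun n ↦ ∑ j ∈ range n, (γ j + d j) * a j + (∑ j ∈ range (n + 1), c j + B)
    with hF
  have hbF : ∀ n, a n + ∑ j ∈ range (n + 1), b j ≤ γ n * a n + F n := fun n ↦
    (hyp n).trans_eq (by simp only [hF]; ring)
  have haF : ∀ n, (1 - γ n) * a n ≤ F n := fun n ↦ by
    linarith [hbF n, sum_nonneg fun j (_ : j ∈ range (n + 1)) ↦ hb j]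
  have hF0 : ∀ n, 0 ≤ F n := fun n ↦
    (mul_nonneg (sub_nonneg.2 (hγ1 n).le) (ha n)).trans (haF n)
  have haσF : ∀ n, a n ≤ (1 - γ n)⁻¹ * F n := fun n ↦
    (le_inv_mul_iff₀ (sub_pos.2 (hγ1 n))).2 (haF n)
  have hstep : ∀ n, F (n + 1) ≤ exp ((1 - γ n)⁻¹ * γ n + d n) * F n + c (n + 1) := fun n ↦
    calc F (n + 1) = F n + (γ n + d n) * a n + c (n + 1) := by
          simp only [hF, sum_range_succ]; ring
      _ ≤ _ := by linarith [add_mul_le_exp_mul (hγ0 n) (hγ1 n) (hd n) (hF0 n) (haσF n)]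
  have hrate : ∀ n, 0 ≤ (1 - γ n)⁻¹ * γ n + d n := fun n ↦
    add_nonneg (mul_nonneg (inv_nonneg.2 (sub_nonneg.2 (hγ1 n).le)) (hγ0 n)) (hd n)
  have hF_le := le_exp_sum_mul_of_le_exp_mul_add hrate (fun n ↦ hc (n + 1)) hstep
  intro n
  calc a n + ∑ j ∈ range (n + 1), b j ≤ F n + (γ n + 0) * a n := by linarith [hbF n]
    _ ≤ exp ((1 - γ n)⁻¹ * γ n + 0) * F n :=
        add_mul_le_exp_mul (hγ0 n) (hγ1 n) le_rfl (hF0 n) (haσF n)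
    _ ≤ exp ((1 - γ n)⁻¹ * γ n) * (exp (∑ j ∈ range n, ((1 - γ j)⁻¹ * γ j + d j))
          * (F 0 + ∑ k ∈ range n, c (k + 1))) := by
        rw [add_zero]; gcongr; exact hF_le n
    _ = _ := by
        rw [exp_add, sum_range_succ' c]
        simp only [hF, sum_range_zero, zero_add, range_one, sum_singleton]
        ring

/-- Discrete Gronwall inequality: if `a n + ∑_{j=0}^n b j ≤ γ n * a n
+ ∑_{j=0}^{n-1} (γ j + d j) * a j + ∑_{j=0}^n c j + B` for all `n`, all
quantities are nonnegative, and `γ j < 1` with `σ j = (1 - γ j)⁻¹`, then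
`a n + ∑_{j=0}^n b j ≤ exp (σ n * γ n + ∑_{j=0}^{n-1} (σ j * γ j + d j)) * (∑_{j=0}^n c j + B)`. -/
theorem discrete_gronwall
    (B : ℝ) (hB : 0 ≤ B)
    (a b c γ d σ : ℕ → ℝ)
    (ha : ∀ j, 0 ≤ a j) (hb : ∀ j, 0 ≤ b j) (hc : ∀ j, 0 ≤ c j)
    (hγ0 : ∀ j, 0 ≤ γ j) (hd : ∀ j, 0 ≤ d j)
    (hγ1 : ∀ j, γ j < 1)
    (hσ : ∀ j, σ j = (1 - γ j)⁻¹)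
    (hyp : ∀ n, a n + ∑ j ∈ range (n + 1), b j
      ≤ γ n * a n + ∑ j ∈ range n, (γ j + d j) * a j + ∑ j ∈ range (n + 1), c j + B) :
    ∀ n, a n + ∑ j ∈ range (n + 1), b j
      ≤ Real.exp (σ n * γ n + ∑ j ∈ range n, (σ j * γ j + d j))
        * (∑ j ∈ range (n + 1), c j + B) :=
  discrete_gronwall_general B a b c γ d σ ha hb hc hγ0 hd hγ1 hσ hyp
end Paper
end

section
/- With the POD setup (snapshots y_1,…,y_N in an inner product space X, correlation matrix K with positive eigenvalues λ_1 ≥ … ≥ λ_d and POD basis φ_1,…,φ_d), let P^r denote the orthogonal projection onto span{φ_1,…,φ_r} for 1 ≤ r ≤ d. Then (1/N) Σ_{j=1}^N ‖y_j - P^r y_j‖_X² = Σ_{k=r+1}^d λ_k. -/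
open Finset
open scoped RealInnerProductSpace

/-! The spectral decomposition `⟪y i, y j⟫ = N ∑ₖ λₖ vₖᵢ vₖⱼ` and the orthonormality of the `vₖ`
give `⟪φₖ, yⱼ⟫ = √(N λₖ) vₖⱼ`, from which the `φₖ` are orthonormal. Hence
`P yⱼ = ∑_{k<r} ⟪φₖ, yⱼ⟫ φₖ` and, by Pythagoras, `‖yⱼ - P yⱼ‖² = ‖yⱼ‖² - ∑_{k<r} N λₖ vₖⱼ²`.
Summing over `j` with `∑ⱼ vₖⱼ² = 1` turns `∑ⱼ ‖yⱼ‖²` into `N ∑ₖ λₖ` and the subtracted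
term into `N ∑_{k<r} λₖ`. -/

namespace Orthonormal

variable {ι E : Type*} [NormedAddCommGroup E] [InnerProductSpace ℝ E] {e : ι → E}

theorem norm_sub_sum_inner_smul_sq (he : Orthonormal ℝ e) (s : Finset ι) (x : E) :
    ‖x - ∑ i ∈ s, ⟪e i, x⟫ • e i‖ ^ 2 = ‖x‖ ^ 2 - ∑ i ∈ s, ⟪e i, x⟫ ^ 2 := by
  have hx : ⟪x, ∑ i ∈ s, ⟪e i, x⟫ • e i⟫ = ∑ i ∈ s, ⟪e i, x⟫ ^ 2 := by
    simp only [inner_sum, real_inner_smul_right, real_inner_comm x, sq]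
  have hq : ‖∑ i ∈ s, ⟪e i, x⟫ • e i‖ ^ 2 = ∑ i ∈ s, ⟪e i, x⟫ ^ 2 := by
    rw [← real_inner_self_eq_norm_sq, he.inner_sum]
    simp only [conj_trivial, sq]
  rw [norm_sub_sq_real, hx, hq]
  ring

theorem eq_sum_inner_smul_of_mem_span (he : Orthonormal ℝ e) {s : Finset ι} {x p : E}
    (hp : p ∈ Submodule.span ℝ (e '' s)) (hxp : ∀ i ∈ s, ⟪x - p, e i⟫ = 0) :
    p = ∑ i ∈ s, ⟪e i, x⟫ • e i := by
  obtain ⟨l, hl, rfl⟩ := (Finsupp.mem_span_image_iff_linearCombination ℝ).mp hp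
  rw [Finsupp.linearCombination_apply, Finsupp.sum_of_support_subset l hl _ (by simp)]
  refine sum_congr rfl fun i hi => ?_
  have hcoeff : ⟪e i, x⟫ = l i := by
    rw [← he.inner_right_finsupp, real_inner_comm, real_inner_comm _ (e i), ← sub_eq_zero,
      ← inner_sub_left, hxp i hi]
  rw [hcoeff]

end Orthonormal

section POD

variable {X : Type*} [NormedAddCommGroup X] [InnerProductSpace ℝ X] {N d : ℕ}

noncomputable def podMode (y : Fin N → X) (lam : Fin d → ℝ) (v : Fin d → Fin N → ℝ)
    (k : Fin d) : X :=
  (1 / (Real.sqrt N * Real.sqrt (lam k))) • ∑ j, v k j • y j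

variable {y : Fin N → X} {lam : Fin d → ℝ} {v : Fin d → Fin N → ℝ}

theorem sum_mul_inner_snapshots
    (hortho : ∀ k l, ∑ j, v k j * v l j = if k = l then (1 : ℝ) else 0)
    (hsnap : ∀ i j, ⟪y i, y j⟫ = N * ∑ k, lam k * v k i * v k j) (k : Fin d) (j : Fin N) :
    ∑ i, v k i * ⟪y i, y j⟫ = N * lam k * v k j := by
  calc ∑ i, v k i * ⟪y i, y j⟫
      = ∑ m, N * lam m * v m j * ∑ i, v k i * v m i := by
        simp_rw [hsnap, mul_sum]
        rw [sum_comm]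
        exact sum_congr rfl fun m _ => sum_congr rfl fun i _ => by ring
    _ = N * lam k * v k j := by simp [hortho]

theorem inner_podMode_snapshot
    (hortho : ∀ k l, ∑ j, v k j * v l j = if k = l then (1 : ℝ) else 0)
    (hsnap : ∀ i j, ⟪y i, y j⟫ = N * ∑ k, lam k * v k i * v k j) {k : Fin d}
    (hlam : 0 ≤ lam k) (j : Fin N) :
    ⟪podMode y lam v k, y j⟫ = Real.sqrt N * Real.sqrt (lam k) * v k j := by
  rw [podMode, real_inner_smul_left, sum_inner]
  simp_rw [real_inner_smul_left]
  rw [sum_mul_inner_snapshots hortho hsnap]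
  set c := Real.sqrt N * Real.sqrt (lam k)
  have hc : (N : ℝ) * lam k = c ^ 2 := by
    rw [mul_pow, Real.sq_sqrt N.cast_nonneg, Real.sq_sqrt hlam]
  rw [hc]
  rcases eq_or_ne c 0 with hc0 | hc0
  · simp [hc0]
  · field_simp

theorem orthonormal_podMode (hN : 0 < N) (hlam : ∀ k, 0 < lam k)
    (hortho : ∀ k l, ∑ j, v k j * v l j = if k = l then (1 : ℝ) else 0)
    (hsnap : ∀ i j, ⟪y i, y j⟫ = N * ∑ k, lam k * v k i * v k j) :
    Orthonormal ℝ (podMode y lam v) := by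
  rw [orthonormal_iff_ite]
  intro k l
  have hc : ∀ k, Real.sqrt N * Real.sqrt (lam k) ≠ 0 := fun k => by
    have := hlam k
    positivity
  nth_rw 2 [podMode]
  rw [real_inner_smul_right, inner_sum]
  simp_rw [real_inner_smul_right, inner_podMode_snapshot hortho hsnap (hlam k).le]
  calc 1 / (Real.sqrt N * Real.sqrt (lam l)) *
        ∑ j, v l j * (Real.sqrt N * Real.sqrt (lam k) * v k j)
      = Real.sqrt N * Real.sqrt (lam k) / (Real.sqrt N * Real.sqrt (lam l)) *
          ∑ j, v k j * v l j := by
        rw [mul_sum, mul_sum]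
        exact sum_congr rfl fun j _ => by ring
    _ = if k = l then 1 else 0 := by
        rw [hortho]
        split_ifs with hkl
        · rw [hkl, div_self (hc l), one_mul]
        · rw [mul_zero]

theorem sum_inner_podMode_snapshots_sq
    (hortho : ∀ k l, ∑ j, v k j * v l j = if k = l then (1 : ℝ) else 0)
    (hsnap : ∀ i j, ⟪y i, y j⟫ = N * ∑ k, lam k * v k i * v k j) {k : Fin d}
    (hlam : 0 ≤ lam k) :
    ∑ j, ⟪podMode y lam v k, y j⟫ ^ 2 = N * lam k := by
  simp_rw [inner_podMode_snapshot hortho hsnap hlam, mul_pow, Real.sq_sqrt N.cast_nonneg,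
    Real.sq_sqrt hlam]
  rw [← mul_sum]
  simp only [sq, hortho, if_pos, mul_one]

theorem sum_norm_sq_snapshots
    (hortho : ∀ k l, ∑ j, v k j * v l j = if k = l then (1 : ℝ) else 0)
    (hsnap : ∀ i j, ⟪y i, y j⟫ = N * ∑ k, lam k * v k i * v k j) :
    ∑ j, ‖y j‖ ^ 2 = N * ∑ k, lam k := by
  simp_rw [← real_inner_self_eq_norm_sq, hsnap, ← mul_sum]
  rw [sum_comm]
  simp only [mul_assoc, ← mul_sum, hortho, if_pos, mul_one]

end POD

theorem pod_projection_error_formula_general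
    {X : Type*} [NormedAddCommGroup X] [InnerProductSpace ℝ X]
    (N d : ℕ) (hN : 0 < N)
    (y : Fin N → X)
    (K : Matrix (Fin N) (Fin N) ℝ)
    (hK : ∀ i j, K i j = (1 / (N : ℝ)) * (inner ℝ (y i) (y j) : ℝ))
    (lam : Fin d → ℝ) (hlam : ∀ k, 0 < lam k)
    (v : Fin d → (Fin N → ℝ))
    (hortho : ∀ k l, ∑ j, v k j * v l j = if k = l then (1 : ℝ) else 0)
    (hspec : ∀ i j, K i j = ∑ k, lam k * v k i * v k j)
    (φ : Fin d → X)
    (hφ : ∀ k, φ k = (1 / (Real.sqrt N * Real.sqrt (lam k))) • ∑ j, v k j • y j)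
    (r : ℕ)
    (P : X →ₗ[ℝ] X)
    (hPmem : ∀ x : X,
      P x ∈ Submodule.span ℝ {z : X | ∃ k : Fin d, (k : ℕ) < r ∧ z = φ k})
    (hPorth : ∀ x : X, ∀ z ∈ Submodule.span ℝ
      {z : X | ∃ k : Fin d, (k : ℕ) < r ∧ z = φ k},
      (inner ℝ (x - P x) z : ℝ) = 0) :
    (1 / (N : ℝ)) * ∑ j, ‖y j - P (y j)‖ ^ 2
      = ∑ k ∈ univ.filter (fun k : Fin d => r ≤ (k : ℕ)), lam k := by
  have hN0 : (N : ℝ) ≠ 0 := Nat.cast_ne_zero.mpr hN.ne'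
  have hsnap : ∀ i j, ⟪y i, y j⟫ = N * ∑ k, lam k * v k i * v k j := fun i j => by
    rw [← hspec, hK, ← mul_assoc, mul_one_div_cancel hN0, one_mul]
  obtain rfl : φ = podMode y lam v := funext hφ
  set s := univ.filter fun k : Fin d => (k : ℕ) < r
  have hspan : {z : X | ∃ k : Fin d, (k : ℕ) < r ∧ z = podMode y lam v k} =
      podMode y lam v '' s := by
    ext z
    simp [s, eq_comm]
  have he := orthonormal_podMode hN hlam hortho hsnap
  have herr (j : Fin N) :
      ‖y j - P (y j)‖ ^ 2 = ‖y j‖ ^ 2 - ∑ k ∈ s, ⟪podMode y lam v k, y j⟫ ^ 2 := by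
    rw [he.eq_sum_inner_smul_of_mem_span (hspan ▸ hPmem (y j)) fun k hk =>
      hPorth _ _ (Submodule.subset_span ⟨k, by simpa [s] using hk, rfl⟩),
      he.norm_sub_sum_inner_smul_sq]
  simp_rw [herr, sum_sub_distrib]
  rw [sum_comm, sum_norm_sq_snapshots hortho hsnap,
    sum_congr rfl fun k _ => sum_inner_podMode_snapshots_sq hortho hsnap (hlam k).le,
    ← mul_sum, ← mul_sub, one_div, inv_mul_cancel_left₀ hN0,
    ← sum_filter_add_sum_filter_not univ fun k : Fin d => (k : ℕ) < r]
  simp only [s, not_lt, add_sub_cancel_left]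

/-- POD error formula (Kunisch–Volkwein): with snapshots `y j`, correlation
matrix `K i j = (1/N)⟪y i, y j⟫` having spectral decomposition
`K i j = ∑ k, λ k * v k i * v k j` with positive eigenvalues `λ 1 ≥ … ≥ λ d`
and orthonormal eigenvectors `v k`, POD modes
`φ k = (1/(√N √(λ k))) • ∑ j, v k j • y j`, and `P` the orthogonal projection
onto the span of the first `r` POD modes (`1 ≤ r ≤ d`), one has
`(1/N) ∑ j ‖y j - P (y j)‖² = ∑_{k > r} λ k`. -/
theorem pod_projection_error_formula
    {X : Type*} [NormedAddCommGroup X] [InnerProductSpace ℝ X]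
    (N d : ℕ) (hN : 0 < N)
    (y : Fin N → X)
    (K : Matrix (Fin N) (Fin N) ℝ)
    (hK : ∀ i j, K i j = (1 / (N : ℝ)) * (inner ℝ (y i) (y j) : ℝ))
    (lam : Fin d → ℝ) (hlam : ∀ k, 0 < lam k)
    (hmono : ∀ k l : Fin d, k ≤ l → lam l ≤ lam k)
    (v : Fin d → (Fin N → ℝ))
    (hortho : ∀ k l, ∑ j, v k j * v l j = if k = l then (1 : ℝ) else 0)
    (hspec : ∀ i j, K i j = ∑ k, lam k * v k i * v k j)
    (φ : Fin d → X)
    (hφ : ∀ k, φ k = (1 / (Real.sqrt N * Real.sqrt (lam k))) • ∑ j, v k j • y j)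
    (r : ℕ) (hr1 : 1 ≤ r) (hrd : r ≤ d)
    (P : X →ₗ[ℝ] X)
    (hPmem : ∀ x : X,
      P x ∈ Submodule.span ℝ {z : X | ∃ k : Fin d, (k : ℕ) < r ∧ z = φ k})
    (hPorth : ∀ x : X, ∀ z ∈ Submodule.span ℝ
      {z : X | ∃ k : Fin d, (k : ℕ) < r ∧ z = φ k},
      (inner ℝ (x - P x) z : ℝ) = 0) :
    (1 / (N : ℝ)) * ∑ j, ‖y j - P (y j)‖ ^ 2
      = ∑ k ∈ univ.filter (fun k : Fin d => r ≤ (k : ℕ)), lam k :=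
  pod_projection_error_formula_general N d hN y K hK lam hlam v hortho hspec φ hφ r P hPmem hPorth
end

section
/- Let X = H_0^1(Ω) with norm ‖∇·‖_{L²}, let u_0,…,u_M ∈ X, τ > 0, Δt > 0, and suppose P is a linear map on X such that ‖∇(I-P)u_0‖² + (1/(M+1))(τ²/Δt²) Σ_{j=1}^M ‖∇(I-P)(u_j - u_{j-1})‖² ≤ Σ², for some Σ ≥ 0, where the snapshot set includes w_0 = u_0. Then for every 0 ≤ n ≤ M, ‖∇(I-P)u_n‖² ≤ (2 + 4 T²/τ²) Σ², where T = M Δt. -/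
open Finset

set_option maxHeartbeats 1000000 in
/-- Pointwise projection error bound from the difference-quotient POD bound.
Here `X` is a real inner product space whose norm plays the role of
`‖∇·‖_{L²}` on `H_0^1(Ω)`. If
`‖(I-P)u 0‖² + (1/(M+1))(τ²/Δt²) ∑_{j=1}^M ‖(I-P)(u j - u (j-1))‖² ≤ S²`,
then for every `0 ≤ n ≤ M`, `‖(I-P)(u n)‖² ≤ (2 + 4 T²/τ²) S²`, with `T = M Δt`. -/
theorem pointwise_projection_error_bound
    {X : Type*} [NormedAddCommGroup X] [InnerProductSpace ℝ X]
    (M : ℕ) (hM : 1 ≤ M) (u : ℕ → X) (P : X →ₗ[ℝ] X)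
    (τ Δt S T : ℝ) (hτ : 0 < τ) (hΔt : 0 < Δt) (hS : 0 ≤ S)
    (hT : T = (M : ℝ) * Δt)
    (hyp : ‖u 0 - P (u 0)‖ ^ 2
        + (1 / ((M : ℝ) + 1)) * (τ ^ 2 / Δt ^ 2)
          * ∑ j ∈ Icc 1 M, ‖(u j - u (j - 1)) - P (u j - u (j - 1))‖ ^ 2
      ≤ S ^ 2) :
    ∀ n ≤ M, ‖u n - P (u n)‖ ^ 2 ≤ (2 + 4 * T ^ 2 / τ ^ 2) * S ^ 2 := by
  intro n hn
  set d : ℕ → X := fun j => (u j - u (j - 1)) - P (u j - u (j - 1)) with hd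
  -- telescoping identity
  have tele : ∀ m : ℕ, u m - P (u m) = (u 0 - P (u 0)) + ∑ j ∈ Icc 1 m, d j := by
    intro m
    induction m with
    | zero => simp
    | succ k ih =>
      rw [Finset.sum_Icc_succ_top (Nat.one_le_iff_ne_zero.mpr (Nat.succ_ne_zero k)), ← add_assoc,
        ← ih]
      simp only [hd, Nat.add_sub_cancel, map_sub]
      abel
  have h1 : ‖u n - P (u n)‖ ≤ ‖u 0 - P (u 0)‖ + ∑ j ∈ Icc 1 n, ‖d j‖ := by
    rw [tele n]
    exact (norm_add_le _ _).trans (by gcongr; exact norm_sum_le _ _)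
  have h2 : (∑ j ∈ Icc 1 n, ‖d j‖) ^ 2 ≤ (n : ℝ) * ∑ j ∈ Icc 1 n, ‖d j‖ ^ 2 := by
    have := sq_sum_le_card_mul_sum_sq (s := Icc 1 n) (f := fun j => ‖d j‖)
    simpa [Nat.card_Icc] using this
  have h3 : ∑ j ∈ Icc 1 n, ‖d j‖ ^ 2 ≤ ∑ j ∈ Icc 1 M, ‖d j‖ ^ 2 :=
    Finset.sum_le_sum_of_subset_of_nonneg (Finset.Icc_subset_Icc_right hn)
      (fun i _ _ => by positivity)
  -- extract the two bounds from hyp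
  have hSnn : (0:ℝ) ≤ ∑ j ∈ Icc 1 M, ‖d j‖ ^ 2 := Finset.sum_nonneg fun i _ => by positivity
  have hc : (0:ℝ) < (1 / ((M : ℝ) + 1)) * (τ ^ 2 / Δt ^ 2) := by positivity
  have he0 : ‖u 0 - P (u 0)‖ ^ 2 ≤ S ^ 2 := by nlinarith [mul_nonneg hc.le hSnn]
  have hτ2 : (0:ℝ) < τ ^ 2 := by positivity
  have hdq : ∑ j ∈ Icc 1 M, ‖d j‖ ^ 2 ≤ ((M : ℝ) + 1) * (Δt ^ 2 / τ ^ 2) * S ^ 2 := by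
    have h0 : (0:ℝ) ≤ ‖u 0 - P (u 0)‖ ^ 2 := by positivity
    have : (1 / ((M : ℝ) + 1)) * (τ ^ 2 / Δt ^ 2) * ∑ j ∈ Icc 1 M, ‖d j‖ ^ 2 ≤ S ^ 2 := by
      linarith
    calc ∑ j ∈ Icc 1 M, ‖d j‖ ^ 2
        = (((M : ℝ) + 1) * (Δt ^ 2 / τ ^ 2))
            * ((1 / ((M : ℝ) + 1) * (τ ^ 2 / Δt ^ 2)) * ∑ j ∈ Icc 1 M, ‖d j‖ ^ 2) := by
          field_simp
      _ ≤ (((M : ℝ) + 1) * (Δt ^ 2 / τ ^ 2)) * S ^ 2 := by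
          have hC : (0:ℝ) ≤ ((M : ℝ) + 1) * (Δt ^ 2 / τ ^ 2) := by positivity
          exact mul_le_mul_of_nonneg_left this hC
  -- combine
  have hA : (0:ℝ) ≤ ∑ j ∈ Icc 1 n, ‖d j‖ := Finset.sum_nonneg fun i _ => by positivity
  have he0n : (0:ℝ) ≤ ‖u 0 - P (u 0)‖ := norm_nonneg _
  have hen : ‖u n - P (u n)‖ ^ 2 ≤ 2 * ‖u 0 - P (u 0)‖ ^ 2 + 2 * (∑ j ∈ Icc 1 n, ‖d j‖) ^ 2 := by
    nlinarith [norm_nonneg (u n - P (u n)), sq_nonneg (‖u 0 - P (u 0)‖ - ∑ j ∈ Icc 1 n, ‖d j‖)]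
  have hnM : (n : ℝ) ≤ (M : ℝ) := Nat.cast_le.mpr hn
  have hM1 : (1:ℝ) ≤ (M : ℝ) := by exact_mod_cast hM
  have hsum : (∑ j ∈ Icc 1 n, ‖d j‖) ^ 2 ≤ (M : ℝ) * (((M : ℝ) + 1) * (Δt ^ 2 / τ ^ 2) * S ^ 2) := by
    calc (∑ j ∈ Icc 1 n, ‖d j‖) ^ 2 ≤ (n : ℝ) * ∑ j ∈ Icc 1 n, ‖d j‖ ^ 2 := h2
      _ ≤ (M : ℝ) * (((M : ℝ) + 1) * (Δt ^ 2 / τ ^ 2) * S ^ 2) := by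
          have := h3.trans hdq
          have hsn : (0:ℝ) ≤ ∑ j ∈ Icc 1 n, ‖d j‖ ^ 2 := Finset.sum_nonneg fun i _ => by positivity
          nlinarith
  rw [hT]
  have key : (M : ℝ) * (((M : ℝ) + 1) * (Δt ^ 2 / τ ^ 2) * S ^ 2)
      ≤ 2 * ((M : ℝ) * Δt) ^ 2 * S ^ 2 / τ ^ 2 := by
    rw [show (M : ℝ) * (((M : ℝ) + 1) * (Δt ^ 2 / τ ^ 2) * S ^ 2)
        = (M : ℝ) * ((M : ℝ) + 1) * Δt ^ 2 * S ^ 2 / τ ^ 2 by ring]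
    rw [div_le_div_iff_of_pos_right hτ2]
    have hMnn : (0:ℝ) ≤ (M : ℝ) := Nat.cast_nonneg M
    have hfact : (0:ℝ) ≤ (M : ℝ) * ((M : ℝ) - 1) * Δt ^ 2 * S ^ 2 :=
      mul_nonneg (mul_nonneg (mul_nonneg hMnn (by linarith)) (sq_nonneg Δt)) (sq_nonneg S)
    nlinarith [hfact]
  have hring : (2 + 4 * ((M : ℝ) * Δt) ^ 2 / τ ^ 2) * S ^ 2
      = 2 * S ^ 2 + 2 * (2 * ((M : ℝ) * Δt) ^ 2 * S ^ 2 / τ ^ 2) := by ring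
  linarith [hen, hsum, he0, key]
end
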